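/- arXiv:1908.06611 — 5 statements merged into one kernel-verified Lean document; each statement's English description precedes it below -/
import Mathlib

section
/- Let (v_n)_{n≥1} be a sequence of nonnegative reals with Σ_{n=1}^∞ v_n/n < ∞, and let δ > 0. Then there exists a strictly increasing sequence of positive integers (n_r)_{r≥1} such that Σ_{r=1}^∞ v_{n_r} < ∞, n_{r+1} ≤ (1+δ) n_r for all r ≥ 1, and √(1+δ) · n_{r−1} ≤ n_{r+1} for all r ≥ 2. -/
/-!
Cut `ℕ` into the blocks `[a_r, a_{r+1})` with `a_r = ⌈C t^r⌉₊`, `t = √(1+δ)` and `C = 2/(t-1)`;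
the choice of `C` makes every block at least `t^r` long, hence comparable to its right endpoint.
In block `r` pick `n_r` where `v` is at most its average over the block. Then
`v_{n_r} ≤ K ∑_{n ∈ [a_r, a_{r+1})} v_n/n`, so summing over the disjoint blocks gives
`∑_r v_{n_r} ≤ K ∑_n v_n/n < ∞`. Since `a_{r+k} ≈ t^k a_r`, we get `n_{r+1} < t² a_r ≤ (1+δ) n_r`
and `t n_r < t a_{r+1} ≤ a_{r+2} ≤ n_{r+2}`.
-/

open Finset

theorem sum_range_sum_Ico {M : Type*} [AddCommMonoid M] {a : ℕ → ℕ} (ha : Monotone a)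
    (g : ℕ → M) (R : ℕ) :
    ∑ r ∈ range R, ∑ n ∈ Ico (a r) (a (r + 1)), g n = ∑ n ∈ Ico (a 0) (a R), g n := by
  induction R with
  | zero => simp
  | succ R ih => rw [sum_range_succ, ih, sum_Ico_consecutive _ (ha R.zero_le) (ha R.le_succ)]

theorem Summable.sum_Ico_of_monotone {g : ℕ → ℝ} (hg : Summable g) (hg0 : ∀ n, 0 ≤ g n)
    {a : ℕ → ℕ} (ha : Monotone a) :
    Summable fun r => ∑ n ∈ Ico (a r) (a (r + 1)), g n := by
  refine summable_of_sum_range_le (c := ∑' n, g n) (fun r => sum_nonneg fun n _ => hg0 n)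
    fun R => ?_
  rw [sum_range_sum_Ico ha]
  exact hg.sum_le_tsum _ fun n _ => hg0 n

theorem exists_mem_Ico_le_mul_sum_div {v : ℕ → ℝ} (hv : ∀ n, 0 ≤ v n) {a b : ℕ} {K : ℝ}
    (hab : a < b) (ha : 0 < a) (hK : (b : ℝ) ≤ K * (b - a)) :
    ∃ m ∈ Ico a b, v m ≤ K * ∑ n ∈ Ico a b, v n / n := by
  set S := ∑ n ∈ Ico a b, v n / n
  refine exists_le_of_sum_le (nonempty_Ico.2 hab) ?_
  have hv_le : ∀ n ∈ Ico a b, v n ≤ b * (v n / n) := fun n hn => by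
    obtain ⟨han, hnb⟩ := mem_Ico.1 hn
    have hn : (0 : ℝ) < n := by exact_mod_cast ha.trans_le han
    calc v n = n * (v n / n) := (mul_div_cancel₀ _ hn.ne').symm
      _ ≤ b * (v n / n) := by gcongr; exact div_nonneg (hv n) hn.le
  calc ∑ n ∈ Ico a b, v n ≤ ∑ n ∈ Ico a b, b * (v n / n) := sum_le_sum hv_le
    _ = b * S := (mul_sum _ _ _).symm
    _ ≤ K * (b - a) * S :=
        mul_le_mul_of_nonneg_right hK (sum_nonneg fun n _ => div_nonneg (hv n) n.cast_nonneg)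
    _ = ∑ _n ∈ Ico a b, K * S := by
        rw [sum_const, Nat.card_Ico, nsmul_eq_mul, Nat.cast_sub hab.le]; ring

theorem exists_summable_comp_of_mem_Ico {v : ℕ → ℝ} (hv : ∀ n, 0 ≤ v n)
    (hsum : Summable fun n : ℕ => v n / n) {a : ℕ → ℕ} (ha : StrictMono a) (ha0 : 0 < a 0)
    {K : ℝ} (hK : ∀ r, (a (r + 1) : ℝ) ≤ K * (a (r + 1) - a r)) :
    ∃ nseq : ℕ → ℕ, (∀ r, nseq r ∈ Ico (a r) (a (r + 1))) ∧ Summable (v ∘ nseq) := by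
  choose nseq hmem hle using fun r =>
    exists_mem_Ico_le_mul_sum_div hv (ha r.lt_succ_self) (ha0.trans_le (ha.monotone r.zero_le))
      (hK r)
  refine ⟨nseq, hmem, Summable.of_nonneg_of_le (fun r => hv _) hle ?_⟩
  exact ((hsum.sum_Ico_of_monotone (fun n => div_nonneg (hv n) n.cast_nonneg)
    ha.monotone).mul_left K)

noncomputable def geomGrid (C t : ℝ) (r : ℕ) : ℕ := ⌈C * t ^ r⌉₊

section geomGrid

variable {C t : ℝ}

theorem geomGrid_pos (hC : 0 < C) (ht : 0 < t) (r : ℕ) : 0 < geomGrid C t r :=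
  Nat.ceil_pos.2 (by positivity)

theorem lt_pow_mul_geomGrid_of_lt (ht : 0 ≤ t) {m r k : ℕ} (hm : m < geomGrid C t (r + k)) :
    (m : ℝ) < t ^ k * geomGrid C t r :=
  calc (m : ℝ) < C * t ^ (r + k) := Nat.lt_ceil.1 hm
    _ = t ^ k * (C * t ^ r) := by ring
    _ ≤ t ^ k * geomGrid C t r := by gcongr; exact Nat.le_ceil _

theorem pow_mul_le_geomGrid_of_lt (ht : 0 ≤ t) {m r k : ℕ} (hm : m < geomGrid C t r) :
    t ^ k * m ≤ geomGrid C t (r + k) :=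
  calc t ^ k * m ≤ t ^ k * (C * t ^ r) := by gcongr; exact (Nat.lt_ceil.1 hm).le
    _ = C * t ^ (r + k) := by ring
    _ ≤ geomGrid C t (r + k) := Nat.le_ceil _

theorem geomGrid_strictMono (ht : 1 ≤ t) (hC : 1 ≤ C * (t - 1)) : StrictMono (geomGrid C t) := by
  have hC0 : 0 < C := by nlinarith
  refine strictMono_nat_of_lt_succ fun r => ?_
  have hpow : 1 ≤ t ^ r := one_le_pow₀ ht
  have hgap : C * t ^ (r + 1) - C * t ^ r = C * (t - 1) * t ^ r := by ring
  have : (geomGrid C t r : ℝ) < geomGrid C t (r + 1) :=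
    calc (geomGrid C t r : ℝ) < C * t ^ r + 1 := Nat.ceil_lt_add_one (by positivity)
      _ ≤ C * t ^ (r + 1) := by nlinarith
      _ ≤ geomGrid C t (r + 1) := Nat.le_ceil _
  exact_mod_cast this

theorem geomGrid_succ_le_mul_sub (ht : 1 ≤ t) (hC : 2 ≤ C * (t - 1)) (r : ℕ) :
    (geomGrid C t (r + 1) : ℝ) ≤ (C * t + 1) * (geomGrid C t (r + 1) - geomGrid C t r) := by
  have hC0 : 0 < C := by nlinarith
  have hpow : 1 ≤ t ^ r := one_le_pow₀ ht
  have hsucc_lo : C * t ^ (r + 1) ≤ geomGrid C t (r + 1) := Nat.le_ceil _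
  have hsucc_hi : (geomGrid C t (r + 1) : ℝ) < C * t ^ (r + 1) + 1 :=
    Nat.ceil_lt_add_one (by positivity)
  have hhi : (geomGrid C t r : ℝ) < C * t ^ r + 1 := Nat.ceil_lt_add_one (by positivity)
  have hpow_succ : C * t ^ (r + 1) = C * t * t ^ r := by ring
  have hlen : t ^ r ≤ (geomGrid C t (r + 1) : ℝ) - geomGrid C t r := by
    have hgap : C * t ^ (r + 1) - C * t ^ r = C * (t - 1) * t ^ r := by ring
    nlinarith
  calc (geomGrid C t (r + 1) : ℝ) ≤ (C * t + 1) * t ^ r := by linarith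
    _ ≤ (C * t + 1) * (geomGrid C t (r + 1) - geomGrid C t r) := by gcongr

end geomGrid

/-- Subsequence selection lemma: if `v_n ≥ 0` and `Σ_{n≥1} v_n/n < ∞`, then for any `δ > 0`
there is a strictly increasing sequence `(n_r)_{r≥1}` of positive integers (here `nseq r`
plays the role of `n_{r+1}`) with `Σ_r v_{n_r} < ∞`, `n_{r+1} ≤ (1+δ) n_r` for all `r ≥ 1`,
and `√(1+δ) n_{r-1} ≤ n_{r+1}` for all `r ≥ 2`. -/
theorem stmt8 (v : ℕ → ℝ) (hv : ∀ n, 0 ≤ v n)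
    (hsum : Summable fun n : ℕ => v (n + 1) / ((n : ℝ) + 1))
    (δ : ℝ) (hδ : 0 < δ) :
    ∃ nseq : ℕ → ℕ, StrictMono nseq ∧ 1 ≤ nseq 0 ∧
      (Summable fun r : ℕ => v (nseq r)) ∧
      (∀ r : ℕ, (nseq (r + 1) : ℝ) ≤ (1 + δ) * nseq r) ∧
      (∀ r : ℕ, Real.sqrt (1 + δ) * nseq r ≤ (nseq (r + 2) : ℝ)) := by
  set t := Real.sqrt (1 + δ)
  have ht2 : t ^ 2 = 1 + δ := Real.sq_sqrt (by linarith)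
  have ht : 1 < t := Real.lt_sqrt_of_sq_lt (by linarith)
  set C := 2 / (t - 1)
  have hC : C * (t - 1) = 2 := div_mul_cancel₀ 2 (sub_ne_zero.2 ht.ne')
  have hpos : ∀ r, 0 < geomGrid C t r := geomGrid_pos (div_pos two_pos (sub_pos.2 ht)) (by positivity)
  have hsum' : Summable fun n : ℕ => v n / n :=
    (summable_nat_add_iff 1).1 (by simpa using hsum)
  obtain ⟨nseq, hmem, hsumm⟩ := exists_summable_comp_of_mem_Ico hv hsum'
    (geomGrid_strictMono ht.le (by linarith)) (hpos 0) (geomGrid_succ_le_mul_sub ht.le hC.ge)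
  have hlo : ∀ r, geomGrid C t r ≤ nseq r := fun r => (mem_Ico.1 (hmem r)).1
  have hhi : ∀ r, nseq r < geomGrid C t (r + 1) := fun r => (mem_Ico.1 (hmem r)).2
  refine ⟨nseq, strictMono_nat_of_lt_succ fun r => (hhi r).trans_le (hlo (r + 1)),
    (hpos 0).trans_le (hlo 0), hsumm, fun r => ?_, fun r => ?_⟩
  · calc (nseq (r + 1) : ℝ) ≤ t ^ 2 * geomGrid C t r :=
          (lt_pow_mul_geomGrid_of_lt (r := r) (k := 2) (by positivity) (hhi (r + 1))).le
      _ ≤ (1 + δ) * nseq r := by rw [ht2]; gcongr; exact hlo r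
  · calc t * nseq r = t ^ 1 * nseq r := by rw [pow_one]
      _ ≤ geomGrid C t (r + 2) := pow_mul_le_geomGrid_of_lt (by positivity) (hhi r)
      _ ≤ nseq (r + 2) := by exact_mod_cast hlo (r + 2)
end

section
/- Let m ≥ 1 be an integer and ε > 0. Then, almost surely, there exists a (random) finite N such that for all n ≥ N: l(n) ≤ (1/λ_*) · (log n + log_{(2)} n + ... + log_{(m−1)} n + (1+ε) log_{(m)} n), where log_{(1)} x = log x and log_{(k+1)} x = log(log_{(k)} x) are the iterated logarithms (in particular, for m = 1 the bound reads l(n) ≤ (1+ε)(log n)/λ_*). -/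
open MeasureTheory ProbabilityTheory Filter
open scoped ENNReal

noncomputable section

/-- The random walk `S_n = X_1 + ... + X_n` in `ℤ^d`, with `S_0 = 0`. -/
def walk (d : ℕ) {Ω : Type*} (X : ℕ → Ω → (Fin d → ℤ)) (n : ℕ) (ω : Ω) : Fin d → ℤ :=
  ∑ i ∈ Finset.range n, X i ω

/-- The local time `l(n,x) = Σ_{i=0}^n 1{S_i = x}` of the site `x` up to time `n`. -/
def localTime (d : ℕ) {Ω : Type*} (X : ℕ → Ω → (Fin d → ℤ)) (n : ℕ) (x : Fin d → ℤ)
    (ω : Ω) : ℕ :=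
  ∑ i ∈ Finset.range (n + 1), if walk d X i ω = x then 1 else 0

/-- `γ = P(S_n ≠ 0 for all n ≥ 1)`, the probability of no return to the origin. -/
def noReturnProb (d : ℕ) {Ω : Type*} [MeasurableSpace Ω] (μ : Measure Ω)
    (X : ℕ → Ω → (Fin d → ℤ)) : ℝ :=
  (μ {ω | ∀ n : ℕ, 1 ≤ n → walk d X n ω ≠ 0}).toReal

/-- The maximal local time `l(n) = max{l(n,x) : x ∈ ℤ^d}`; the maximum over all of `ℤ^d`
is attained at a visited site `S_i`, `0 ≤ i ≤ n` (elsewhere the local time is `0`). -/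
def maxLocalTime (d : ℕ) {Ω : Type*} (X : ℕ → Ω → (Fin d → ℤ)) (n : ℕ) (ω : Ω) : ℕ :=
  (Finset.range (n + 1)).sup fun i => localTime d X n (walk d X i ω) ω

/-- Iterated logarithm: `itlog 1 x = log x`, `itlog (k+1) x = log (itlog k x)`. -/
def itlog : ℕ → ℝ → ℝ
  | 0, x => x
  | k + 1, x => Real.log (itlog k x)

/-!
Write `q = 1 - γ` for the return probability. Splitting at the first return and using the
independence of the increments, the walk returns to its starting point at least `j` times with
probability at most `q ^ j`, and by stationarity the same holds for the walk restarted at any time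
`t`. The local time at a site is the number of returns of the walk restarted at its first visit,
so `l(n)` is at most the largest number of returns of the walks restarted at times `t ≤ n`.
With `A(t) = log t + ⋯ + log_{(m-1)} t + (1 + ε) log_{(m)} t`, the probability that the walk
restarted at `t` returns more than `A(t) / λ_*` times is at most `e^{-A(t)} / q`, the term of a
convergent Bertrand series; by Borel–Cantelli this happens for finitely many `t` only. The
finitely many remaining restarted walks return finitely often by transience, and `A` increases to
infinity.
-/

open Finset Real

lemma tendsto_itlog_atTop : ∀ k, Tendsto (itlog k) atTop atTop
  | 0 => tendsto_id
  | k + 1 => tendsto_log_atTop.comp (tendsto_itlog_atTop k)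

lemma eventually_forall_itlog_pos (k : ℕ) : ∀ᶠ x in atTop, ∀ j < k, 0 < itlog j x :=
  (eventually_all_finite (Set.finite_Iio k)).2 fun j _ =>
    (tendsto_itlog_atTop j).eventually_gt_atTop 0

lemma itlog_le_itlog {k : ℕ} {x y : ℝ} (hpos : ∀ j < k, 0 < itlog j x) (hxy : x ≤ y) :
    itlog k x ≤ itlog k y := by
  induction k with
  | zero => exact hxy
  | succ k ih =>
    exact log_le_log (hpos k k.lt_succ_self) (ih fun j hj => hpos j (hj.trans k.lt_succ_self))

lemma hasDerivAt_itlog {k : ℕ} {x : ℝ} (hpos : ∀ j < k, 0 < itlog j x) :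
    HasDerivAt (itlog k) (exp (-∑ i ∈ Icc 1 k, itlog i x)) x := by
  induction k with
  | zero => simpa [show itlog 0 = id from rfl] using hasDerivAt_id x
  | succ k ih =>
    have hk := hpos k k.lt_succ_self
    convert (ih fun j hj => hpos j (hj.trans k.lt_succ_self)).log hk.ne' using 1
    · rfl
    rw [sum_Icc_succ_top (by omega), neg_add, exp_add, itlog, exp_neg (log _), exp_log hk,
      div_eq_mul_inv]

/-- For large `x`,
`exp (iteratedLogSum m ε x) = x · log x ⋯ log_{(m-1)} x · (log_{(m)} x) ^ (1 + ε)`. -/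
def iteratedLogSum (m : ℕ) (ε x : ℝ) : ℝ :=
  ∑ k ∈ Ico 1 m, itlog k x + (1 + ε) * itlog m x

lemma iteratedLogSum_le_iteratedLogSum {m : ℕ} {ε x y : ℝ} (hε : -1 ≤ ε)
    (hpos : ∀ j < m, 0 < itlog j x) (hxy : x ≤ y) :
    iteratedLogSum m ε x ≤ iteratedLogSum m ε y := by
  have hmono : ∀ k ≤ m, itlog k x ≤ itlog k y := fun k hk =>
    itlog_le_itlog (fun j hj => hpos j (hj.trans_le hk)) hxy
  unfold iteratedLogSum
  gcongr with k hk
  · exact hmono k (mem_Ico.1 hk).2.le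
  · linarith
  · exact hmono m le_rfl

lemma tendsto_iteratedLogSum_atTop {m : ℕ} {ε : ℝ} (hε : -1 < ε) :
    Tendsto (iteratedLogSum m ε) atTop atTop := by
  refine tendsto_atTop_mono' atTop ?_
    ((tendsto_itlog_atTop m).const_mul_atTop (show (0 : ℝ) < 1 + ε by linarith))
  filter_upwards [eventually_forall_itlog_pos m] with x hx
  have : 0 ≤ ∑ k ∈ Ico 1 m, itlog k x := sum_nonneg fun k hk => (hx k (mem_Ico.1 hk).2).le
  unfold iteratedLogSum
  linarith

lemma eventually_iteratedLogSum_le {m : ℕ} {ε : ℝ} (hε : -1 ≤ ε) :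
    ∀ᶠ t : ℕ in atTop, ∀ n : ℕ, t ≤ n →
      iteratedLogSum m ε t ≤ iteratedLogSum m ε n := by
  filter_upwards [tendsto_natCast_atTop_atTop.eventually (eventually_forall_itlog_pos m)]
    with t ht n htn
  exact iteratedLogSum_le_iteratedLogSum hε ht (Nat.cast_le.2 htn)

lemma hasDerivAt_exp_neg_mul_itlog {m : ℕ} (hm : 1 ≤ m) (ε : ℝ) {x : ℝ}
    (hpos : ∀ j < m, 0 < itlog j x) :
    HasDerivAt (fun y => exp (-ε * itlog m y)) (-ε * exp (-iteratedLogSum m ε x)) x := by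
  convert ((hasDerivAt_itlog hpos).const_mul (-ε)).exp using 1
  rw [iteratedLogSum, ← sum_Ico_add_eq_sum_Icc hm, mul_left_comm, ← exp_add]
  ring_nf

lemma summable_of_le_sub_succ {f g : ℕ → ℝ} (hf : ∀ n, 0 ≤ f n) (hg : ∀ n, 0 ≤ g n)
    (hfg : ∀ n, f n ≤ g n - g (n + 1)) : Summable f :=
  summable_of_sum_range_le hf fun N =>
    calc ∑ n ∈ range N, f n ≤ ∑ n ∈ range N, (g n - g (n + 1)) :=
          sum_le_sum fun n _ => hfg n
      _ = g 0 - g N := sum_range_sub' g N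
      _ ≤ g 0 := sub_le_self _ (hg N)

/-- Bertrand series: by the mean value theorem, the terms are dominated by the decrements of
`n ↦ (log_{(m-1)} n) ^ (-ε) / ε = exp (-ε log_{(m)} n) / ε`. -/
lemma summable_exp_neg_iteratedLogSum {m : ℕ} (hm : 1 ≤ m) {ε : ℝ} (hε : 0 < ε) :
    Summable fun n : ℕ => exp (-iteratedLogSum m ε n) := by
  obtain ⟨N, hN⟩ : ∃ N : ℕ, ∀ x : ℝ, N ≤ x → ∀ j < m, 0 < itlog j x := by
    obtain ⟨x₀, hx₀⟩ := eventually_atTop.1 (eventually_forall_itlog_pos m)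
    exact ⟨⌈x₀⌉₊, fun x hx => hx₀ x ((Nat.le_ceil x₀).trans hx)⟩
  set g : ℝ → ℝ := fun y => exp (-ε * itlog m y)
  have step : ∀ n : ℕ, N ≤ n →
      exp (-iteratedLogSum m ε (n + 1)) ≤ g n / ε - g (n + 1) / ε := by
    intro n hn
    have hderiv : ∀ y : ℝ, n ≤ y →
        HasDerivAt g (-ε * exp (-iteratedLogSum m ε y)) y := fun y hy =>
      hasDerivAt_exp_neg_mul_itlog hm ε (hN y ((Nat.cast_le.2 hn).trans hy))
    obtain ⟨c, hc, hslope⟩ := exists_hasDerivAt_eq_slope g _ (lt_add_one (n : ℝ))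
      (fun y hy => (hderiv y hy.1).continuousAt.continuousWithinAt)
      (fun y hy => hderiv y hy.1.le)
    have hSc : iteratedLogSum m ε c ≤ iteratedLogSum m ε (n + 1) :=
      iteratedLogSum_le_iteratedLogSum (by linarith)
        (hN c ((Nat.cast_le.2 hn).trans hc.1.le)) hc.2.le
    rw [add_sub_cancel_left, div_one] at hslope
    calc exp (-iteratedLogSum m ε (n + 1)) ≤ exp (-iteratedLogSum m ε c) := by
          gcongr
      _ = g n / ε - g (n + 1) / ε := by
          field_simp
          linarith
  refine (summable_nat_add_iff (N + 1)).1 ?_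
  refine summable_of_le_sub_succ (g := fun n => g (n + N : ℕ) / ε) (fun n => (exp_pos _).le)
    (fun n => div_nonneg (exp_pos _).le hε.le) fun n => ?_
  have := step (n + N) (Nat.le_add_left N n)
  push_cast at this ⊢
  convert this using 4 <;> ring

section Walk

variable {Ω : Type*} {d : ℕ} {X : ℕ → Ω → (Fin d → ℤ)} {ω : Ω}

lemma walk_add (s n : ℕ) :
    walk d X (s + n) ω = walk d X s ω + walk d (fun i => X (s + i)) n ω :=
  sum_range_add _ _ _

@[simp]
lemma localTime_zero_zero : localTime d X 0 0 ω = 1 := by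
  simp [localTime, walk]

lemma localTime_add {s : ℕ} {x : Fin d → ℤ} (hs : walk d X s ω = x) (n : ℕ) :
    localTime d X (s + n) x ω = (∑ i ∈ range s, if walk d X i ω = x then 1 else 0) +
      localTime d (fun i => X (s + i)) n 0 ω := by
  rw [localTime, add_assoc, sum_range_add, localTime]
  simp only [walk_add, hs, add_eq_left]

lemma localTime_of_forall_lt_ne {t n : ℕ} {x : Fin d → ℤ} (htn : t ≤ n)
    (ht : walk d X t ω = x) (hbefore : ∀ i < t, walk d X i ω ≠ x) :
    localTime d X n x ω = localTime d (fun i => X (t + i)) (n - t) 0 ω := by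
  rw [← Nat.add_sub_cancel' htn, localTime_add ht, Nat.add_sub_cancel_left,
    sum_eq_zero fun i hi => if_neg (hbefore i (mem_range.1 hi)), zero_add]

/-- `t` is the first visit to a site of maximal local time. -/
lemma exists_maxLocalTime_eq (n : ℕ) (ω : Ω) :
    ∃ t ≤ n, maxLocalTime d X n ω = localTime d (fun i => X (t + i)) (n - t) 0 ω := by
  classical
  obtain ⟨i, hi, hmax⟩ := exists_mem_eq_sup (range (n + 1)) nonempty_range_add_one
    fun i => localTime d X n (walk d X i ω) ω
  have hvisit : ∃ t, walk d X t ω = walk d X i ω := ⟨i, rfl⟩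
  have hti : Nat.find hvisit ≤ i := Nat.find_min' hvisit rfl
  refine ⟨Nat.find hvisit, hti.trans (Nat.lt_succ_iff.1 (mem_range.1 hi)), ?_⟩
  rw [maxLocalTime, hmax]
  exact localTime_of_forall_lt_ne (hti.trans (Nat.lt_succ_iff.1 (mem_range.1 hi)))
    (Nat.find_spec hvisit) fun j hj => Nat.find_min hvisit hj

end Walk

section Returns

variable {Ω : Type*} {d : ℕ} {X : ℕ → Ω → (Fin d → ℤ)} {ω : Ω}

/-- The walk returns to the origin at least `j` times (the visit at time `0` is counted by the
local time, hence the strict inequality). -/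
def returnsAtLeast (d : ℕ) {Ω : Type*} (X : ℕ → Ω → (Fin d → ℤ)) (j : ℕ) : Set Ω :=
  {ω | ∃ n, j < localTime d X n 0 ω}

def firstReturnAt (d : ℕ) {Ω : Type*} (X : ℕ → Ω → (Fin d → ℤ)) (s : ℕ) : Set Ω :=
  {ω | 0 < s ∧ walk d X s ω = 0 ∧ ∀ i, 0 < i → i < s → walk d X i ω ≠ 0}

lemma one_lt_localTime_of_walk_eq_zero {s : ℕ} (hs : 0 < s) (h : walk d X s ω = 0) :
    1 < localTime d X s 0 ω := by
  have hstart : 1 ≤ ∑ i ∈ range s, if walk d X i ω = 0 then 1 else 0 := by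
    simpa [walk] using single_le_sum (f := fun i => if walk d X i ω = 0 then 1 else 0)
      (fun _ _ => Nat.zero_le _) (mem_range.2 hs)
  rw [← add_zero s, localTime_add h, localTime_zero_zero]
  omega

lemma exists_walk_eq_zero_of_one_lt_localTime {n : ℕ} (h : 1 < localTime d X n 0 ω) :
    ∃ s, 0 < s ∧ s ≤ n ∧ walk d X s ω = 0 := by
  by_contra! hnone
  rw [localTime, sum_range_succ', sum_eq_zero fun i hi =>
    if_neg (hnone (i + 1) i.succ_pos (mem_range.1 hi))] at h
  simp [walk] at h

lemma returnsAtLeast_one :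
    returnsAtLeast d X 1 = {ω | ∀ n, 1 ≤ n → walk d X n ω ≠ 0}ᶜ := by
  ext ω
  simp only [returnsAtLeast, Set.mem_compl_iff, Set.mem_ofPred, not_forall, not_not]
  constructor
  · rintro ⟨n, hn⟩
    obtain ⟨s, hs, -, h⟩ := exists_walk_eq_zero_of_one_lt_localTime hn
    exact ⟨s, hs, h⟩
  · rintro ⟨s, hs, h⟩
    exact ⟨s, one_lt_localTime_of_walk_eq_zero hs h⟩

lemma firstReturnAt_subset_returnsAtLeast_one (s : ℕ) :
    firstReturnAt d X s ⊆ returnsAtLeast d X 1 := fun _ ⟨hs, h, _⟩ =>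
  ⟨s, one_lt_localTime_of_walk_eq_zero hs h⟩

lemma pairwise_disjoint_firstReturnAt :
    Pairwise (Function.onFun Disjoint (firstReturnAt d X)) := by
  intro s s' hss'
  refine Set.disjoint_left.2 fun ω ⟨hs, h, hfirst⟩ ⟨hs', h', hfirst'⟩ => ?_
  rcases hss'.lt_or_gt with hlt | hlt
  · exact hfirst' s hs hlt h
  · exact hfirst s' hs' hlt h'

lemma localTime_of_mem_firstReturnAt {s : ℕ} (h : ω ∈ firstReturnAt d X s) (n : ℕ) :
    localTime d X (s + n) 0 ω = 1 + localTime d (fun i => X (s + i)) n 0 ω := by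
  obtain ⟨hs, hret, hfirst⟩ := h
  obtain ⟨s, rfl⟩ := Nat.exists_eq_add_of_lt hs
  rw [localTime_add hret, zero_add, sum_range_succ', sum_eq_zero fun i hi =>
    if_neg (hfirst (i + 1) i.succ_pos (by simpa using mem_range.1 hi))]
  simp [walk]

lemma notMem_returnsAtLeast_iff {j : ℕ} :
    ω ∉ returnsAtLeast d X j ↔ ∀ n, localTime d X n 0 ω ≤ j := by
  simp [returnsAtLeast]

lemma returnsAtLeast_succ_subset (j : ℕ) :
    returnsAtLeast d X (j + 1) ⊆
      ⋃ s, firstReturnAt d X s ∩ returnsAtLeast d (fun i => X (s + i)) j := by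
  classical
  rintro ω ⟨n, hn⟩
  have hret := exists_walk_eq_zero_of_one_lt_localTime (by omega : 1 < localTime d X n 0 ω)
  have hfirst : ∃ s, 0 < s ∧ walk d X s ω = 0 := by
    obtain ⟨s, hs, -, h⟩ := hret
    exact ⟨s, hs, h⟩
  set s := Nat.find hfirst
  have hmem : ω ∈ firstReturnAt d X s := ⟨(Nat.find_spec hfirst).1, (Nat.find_spec hfirst).2,
    fun i hi his h => Nat.find_min hfirst his ⟨hi, h⟩⟩
  have hsn : s ≤ n := by
    obtain ⟨s', hs', hs'n, h⟩ := hret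
    exact (Nat.find_min' hfirst ⟨hs', h⟩).trans hs'n
  refine Set.mem_iUnion.2 ⟨s, hmem, n - s, ?_⟩
  rw [← Nat.add_sub_cancel' hsn, localTime_of_mem_firstReturnAt hmem] at hn
  omega

end Returns

section Measurability

variable {Ω : Type*} {mΩ : MeasurableSpace Ω} {d : ℕ} {X : ℕ → Ω → (Fin d → ℤ)}

lemma measurable_walk {n : ℕ} (hX : ∀ i < n, Measurable (X i)) : Measurable (walk d X n) :=
  Finset.measurable_sum _ fun i hi => hX i (mem_range.1 hi)

lemma measurableSet_returnsAtLeast (hX : ∀ i, Measurable (X i)) (j : ℕ) :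
    MeasurableSet (returnsAtLeast d X j) := by
  have hwalk : ∀ i, Measurable (walk d X i) := fun i => measurable_walk fun k _ => hX k
  have hlocal : ∀ n, Measurable (localTime d X n 0) := fun n =>
    Finset.measurable_sum _ fun i _ =>
      Measurable.ite (hwalk i (measurableSet_singleton 0)) measurable_const measurable_const
  rw [returnsAtLeast, Set.ofPred_exists]
  exact MeasurableSet.iUnion fun n => hlocal n measurableSet_Ioi

lemma measurableSet_firstReturnAt {s : ℕ} (hX : ∀ i < s, Measurable (X i)) :
    MeasurableSet (firstReturnAt d X s) := by
  have hwalk : ∀ i ≤ s, MeasurableSet {ω | walk d X i ω = 0} := fun i hi =>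
    measurable_walk (fun k hk => hX k (hk.trans_le hi)) (measurableSet_singleton 0)
  refine measurableSet_setOfPred.2 (measurable_const.and ((hwalk s le_rfl).mem.and ?_))
  exact Measurable.forall fun i => measurable_const.imp <| Measurable.forall fun hi =>
    (hwalk i hi.le).mem.not

end Measurability

section Independence

variable {Ω : Type*} {mΩ : MeasurableSpace Ω} {μ : Measure Ω}

lemma map_shift_eq_of_iid {E : Type*} [MeasurableSpace E] {X : ℕ → Ω → E}
    (hX : ∀ i, Measurable (X i)) (hindep : iIndepFun X μ)
    (hident : ∀ i, μ.map (X i) = μ.map (X 0)) (t : ℕ) :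
    μ.map (fun ω i => X (t + i) ω) = μ.map (fun ω i => X i ω) := by
  rw [(hindep.precomp (add_right_injective t)).map_fun_eq_infinitePi_map fun i => hX _,
    hindep.map_fun_eq_infinitePi_map hX]
  simp only [hident]

variable {d : ℕ} {X : ℕ → Ω → (Fin d → ℤ)}

lemma measure_returnsAtLeast_shift (hX : ∀ i, Measurable (X i)) (hindep : iIndepFun X μ)
    (hident : ∀ i, μ.map (X i) = μ.map (X 0)) (t j : ℕ) :
    μ (returnsAtLeast d (fun i => X (t + i)) j) = μ (returnsAtLeast d X j) := by
  have hcoord : MeasurableSet (returnsAtLeast d (fun i (x : ℕ → Fin d → ℤ) => x i) j) :=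
    measurableSet_returnsAtLeast measurable_pi_apply j
  have hpath : ∀ Y : ℕ → Ω → (Fin d → ℤ), (∀ i, Measurable (Y i)) →
      μ (returnsAtLeast d Y j) =
        μ.map (fun ω i => Y i ω) (returnsAtLeast d (fun i x => x i) j) := fun Y hY =>
    (Measure.map_apply (measurable_pi_lambda _ hY) hcoord).symm
  rw [hpath _ fun i => hX _, hpath _ hX, map_shift_eq_of_iid hX hindep hident]

lemma measure_firstReturnAt_inter_returnsAtLeast
    (hX : ∀ i, Measurable (X i)) (hindep : iIndepFun X μ) (s j : ℕ) :
    μ (firstReturnAt d X s ∩ returnsAtLeast d (fun i => X (s + i)) j) =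
      μ (firstReturnAt d X s) * μ (returnsAtLeast d (fun i => X (s + i)) j) := by
  have hle : ∀ {S : Set ℕ} {i}, i ∈ S →
      Measurable[⨆ k ∈ S, MeasurableSpace.comap (X k) inferInstance] (X i) := fun {S i} hi =>
    Measurable.of_comap_le
      (le_iSup₂ (f := fun k (_ : k ∈ S) => MeasurableSpace.comap (X k) _) i hi)
  have hindep' := indep_iSup_of_disjoint (fun i => (hX i).comap_le) hindep.iIndep
    (Set.Iio_disjoint_Ici (le_refl s))
  exact (Indep_iff _ _ _).1 hindep' _ _
    (measurableSet_firstReturnAt fun i hi => hle (Set.mem_Iio.2 hi))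
    (measurableSet_returnsAtLeast (fun i => hle (Set.mem_Ici.2 (Nat.le_add_right s i))) j)

end Independence

section ReturnProbability

variable {Ω : Type*} [MeasurableSpace Ω] {μ : Measure Ω} [IsProbabilityMeasure μ]
  {d : ℕ} {X : ℕ → Ω → (Fin d → ℤ)}

lemma measure_returnsAtLeast_le (hX : ∀ i, Measurable (X i)) (hindep : iIndepFun X μ)
    (hident : ∀ i, μ.map (X i) = μ.map (X 0)) (j : ℕ) :
    μ (returnsAtLeast d X j) ≤ μ (returnsAtLeast d X 1) ^ j := by
  induction j with
  | zero => simpa using prob_le_one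
  | succ j ih =>
    calc μ (returnsAtLeast d X (j + 1))
        ≤ ∑' s, μ (firstReturnAt d X s ∩ returnsAtLeast d (fun i => X (s + i)) j) :=
          (measure_mono (returnsAtLeast_succ_subset j)).trans (measure_iUnion_le _)
      _ = ∑' s, μ (firstReturnAt d X s) * μ (returnsAtLeast d X j) := by
          simp only [measure_firstReturnAt_inter_returnsAtLeast hX hindep,
            measure_returnsAtLeast_shift hX hindep hident]
      _ = μ (⋃ s, firstReturnAt d X s) * μ (returnsAtLeast d X j) := by
          rw [ENNReal.tsum_mul_right, measure_iUnion pairwise_disjoint_firstReturnAt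
            fun s => measurableSet_firstReturnAt fun i _ => hX i]
      _ ≤ μ (returnsAtLeast d X 1) * μ (returnsAtLeast d X 1) ^ j := by
          gcongr
          exact Set.iUnion_subset firstReturnAt_subset_returnsAtLeast_one
      _ = μ (returnsAtLeast d X 1) ^ (j + 1) := (pow_succ' _ _).symm

lemma measure_returnsAtLeast_one (hX : ∀ i, Measurable (X i)) :
    μ (returnsAtLeast d X 1) = ENNReal.ofReal (1 - noReturnProb d μ X) := by
  have hmeas := measurableSet_returnsAtLeast hX 1
  rw [returnsAtLeast_one] at hmeas ⊢
  rw [prob_compl_eq_one_sub hmeas.of_compl, noReturnProb,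
    ENNReal.ofReal_sub _ ENNReal.toReal_nonneg, ENNReal.ofReal_one,
    ENNReal.ofReal_toReal (measure_ne_top μ _)]

end ReturnProbability

lemma pow_natFloor_le {q A : ℝ} (hq0 : 0 < q) (hq1 : q < 1) :
    q ^ ⌊1 / log (1 / q) * A⌋₊ ≤ q⁻¹ * exp (-A) := by
  have hlog : log q ≠ 0 := (log_neg hq0 hq1).ne
  calc q ^ ⌊1 / log (1 / q) * A⌋₊ = q ^ (⌊1 / log (1 / q) * A⌋₊ : ℝ) :=
        (rpow_natCast _ _).symm
    _ ≤ q ^ (1 / log (1 / q) * A - 1) :=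
        rpow_le_rpow_of_exponent_ge hq0 hq1.le (Nat.sub_one_lt_floor _).le
    _ = q⁻¹ * exp (-A) := by
        rw [rpow_sub_one hq0.ne', rpow_def_of_pos hq0]
        simp only [one_div, log_inv]
        field_simp

section LocalTimeBounds

variable {Ω : Type*} [MeasurableSpace Ω] {μ : Measure Ω} [IsProbabilityMeasure μ]
  {d : ℕ} {X : ℕ → Ω → (Fin d → ℤ)}

lemma noReturnProb_le_one : noReturnProb d μ X ≤ 1 :=
  ENNReal.toReal_le_of_le_ofReal zero_le_one (by simpa using prob_le_one)

lemma measure_returnsAtLeast_shift_le (hX : ∀ i, Measurable (X i)) (hindep : iIndepFun X μ)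
    (hident : ∀ i, μ.map (X i) = μ.map (X 0)) (t j : ℕ) :
    μ (returnsAtLeast d (fun i => X (t + i)) j) ≤
      ENNReal.ofReal ((1 - noReturnProb d μ X) ^ j) := by
  rw [measure_returnsAtLeast_shift hX hindep hident,
    ENNReal.ofReal_pow (sub_nonneg.2 noReturnProb_le_one), ← measure_returnsAtLeast_one hX]
  exact measure_returnsAtLeast_le hX hindep hident j

lemma ae_forall_exists_localTime_le (hX : ∀ i, Measurable (X i)) (hindep : iIndepFun X μ)
    (hident : ∀ i, μ.map (X i) = μ.map (X 0)) (hγ0 : 0 < noReturnProb d μ X) :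
    ∀ᵐ ω ∂μ, ∀ t, ∃ C, ∀ n, localTime d (fun i => X (t + i)) n 0 ω ≤ C := by
  refine ae_all_iff.2 fun t => ?_
  have hpow :
      Tendsto (fun j => ENNReal.ofReal ((1 - noReturnProb d μ X) ^ j)) atTop (nhds 0) := by
    simpa using ENNReal.tendsto_ofReal (tendsto_pow_atTop_nhds_zero_of_lt_one
      (sub_nonneg.2 noReturnProb_le_one) (by linarith))
  have hnull : μ (⋂ j, returnsAtLeast d (fun i => X (t + i)) j) = 0 :=
    le_zero_iff.1 <| ge_of_tendsto' hpow fun j =>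
      (measure_mono (Set.iInter_subset _ j)).trans
        (measure_returnsAtLeast_shift_le hX hindep hident t j)
  filter_upwards [measure_eq_zero_iff_ae_notMem.1 hnull] with ω hω
  obtain ⟨C, hC⟩ := Set.mem_iInter.not.1 hω |> not_forall.1
  exact ⟨C, notMem_returnsAtLeast_iff.1 hC⟩

lemma ae_eventually_localTime_le (hX : ∀ i, Measurable (X i)) (hindep : iIndepFun X μ)
    (hident : ∀ i, μ.map (X i) = μ.map (X 0)) {k : ℕ → ℕ}
    (hk : Summable fun t => (1 - noReturnProb d μ X) ^ k t) :
    ∀ᵐ ω ∂μ, ∀ᶠ t in atTop, ∀ n, localTime d (fun i => X (t + i)) n 0 ω ≤ k t := by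
  have hsum : ∑' t, μ (returnsAtLeast d (fun i => X (t + i)) (k t)) ≠ ⊤ := by
    refine ne_top_of_le_ne_top ?_ (ENNReal.tsum_le_tsum fun t =>
      measure_returnsAtLeast_shift_le hX hindep hident t (k t))
    rw [← ENNReal.ofReal_tsum_of_nonneg
      (fun t => pow_nonneg (sub_nonneg.2 noReturnProb_le_one) _) hk]
    exact ENNReal.ofReal_ne_top
  filter_upwards [ae_eventually_notMem hsum] with ω hω
  exact hω.mono fun t ht => notMem_returnsAtLeast_iff.1 ht

end LocalTimeBounds

lemma eventually_forall_le_of_eventually_le {L : ℕ → ℕ → ℕ} {a : ℕ → ℝ}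
    (hbdd : ∀ t, ∃ C, ∀ n, L t n ≤ C)
    (hev : ∀ᶠ t in atTop, ∀ n, (L t n : ℝ) ≤ a t)
    (hmono : ∀ᶠ t in atTop, ∀ n, t ≤ n → a t ≤ a n) (htend : Tendsto a atTop atTop) :
    ∀ᶠ n in atTop, ∀ t ≤ n, (L t (n - t) : ℝ) ≤ a n := by
  obtain ⟨T, hT⟩ := eventually_atTop.1 (hev.and hmono)
  choose C hC using hbdd
  filter_upwards [htend.eventually_ge_atTop (((range T).sup C : ℕ) : ℝ)] with n hn t htn
  rcases lt_or_ge t T with htT | htT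
  · calc (L t (n - t) : ℝ) ≤ ((range T).sup C : ℕ) := by
          exact_mod_cast (hC t (n - t)).trans (le_sup (mem_range.2 htT))
      _ ≤ a n := hn
  · exact ((hT t htT).1 (n - t)).trans ((hT t htT).2 n htn)

theorem stmt9_general
    {Ω : Type*} [MeasurableSpace Ω] (μ : Measure Ω) [IsProbabilityMeasure μ]
    (d : ℕ)
    (X : ℕ → Ω → (Fin d → ℤ))
    (hmeas : ∀ i, Measurable (X i))
    (hindep : iIndepFun X μ)
    (hident : ∀ i, μ.map (X i) = μ.map (X 0))
    (hγ0 : 0 < noReturnProb d μ X) (hγ1 : noReturnProb d μ X < 1)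
    (m : ℕ) (hm : 1 ≤ m) (ε : ℝ) (hε : 0 < ε) :
    ∀ᵐ ω ∂μ, ∃ N : ℕ, ∀ n : ℕ, N ≤ n →
      (maxLocalTime d X n ω : ℝ) ≤
        (1 / Real.log (1 / (1 - noReturnProb d μ X))) *
          ((∑ k ∈ Finset.Ico 1 m, itlog k n) + (1 + ε) * itlog m n) := by
  set q := 1 - noReturnProb d μ X
  have hq0 : 0 < q := sub_pos.2 hγ1
  have hq1 : q < 1 := sub_lt_self 1 hγ0
  have hlam : 0 < 1 / log (1 / q) := one_div_pos.2 (log_pos (one_lt_one_div hq0 hq1))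
  set a : ℕ → ℝ := fun n => 1 / log (1 / q) * iteratedLogSum m ε n
  have htend : Tendsto a atTop atTop := Tendsto.const_mul_atTop hlam <|
    (tendsto_iteratedLogSum_atTop (by linarith)).comp tendsto_natCast_atTop_atTop
  have hmono : ∀ᶠ t in atTop, ∀ n, t ≤ n → a t ≤ a n := by
    filter_upwards [eventually_iteratedLogSum_le (m := m) (ε := ε) (by linarith)] with t ht n htn
    exact mul_le_mul_of_nonneg_left (ht n htn) hlam.le
  have hsum : Summable fun t => q ^ ⌊a t⌋₊ :=
    Summable.of_nonneg_of_le (fun t => by positivity) (fun t => pow_natFloor_le hq0 hq1)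
      ((summable_exp_neg_iteratedLogSum hm hε).mul_left q⁻¹)
  filter_upwards [ae_forall_exists_localTime_le hmeas hindep hident hγ0,
    ae_eventually_localTime_le hmeas hindep hident hsum] with ω hbdd hev
  have hev' :
      ∀ᶠ t in atTop, ∀ n, (localTime d (fun i => X (t + i)) n 0 ω : ℝ) ≤ a t := by
    filter_upwards [hev, htend.eventually_ge_atTop 0] with t ht hpos n
    exact (Nat.cast_le.2 (ht n)).trans (Nat.floor_le hpos)
  obtain ⟨N, hN⟩ :=
    eventually_atTop.1 (eventually_forall_le_of_eventually_le hbdd hev' hmono htend)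
  refine ⟨N, fun n hn => ?_⟩
  obtain ⟨t, htn, heq⟩ := exists_maxLocalTime_eq n ω
  rw [heq]
  exact hN n hn t htn

/-- Almost sure eventual upper bound for the maximal local time:
`l(n) ≤ (1/λ_*)(log n + log_{(2)} n + ... + log_{(m-1)} n + (1+ε) log_{(m)} n)`. -/
theorem stmt9
    {Ω : Type*} [MeasurableSpace Ω] (μ : Measure Ω) [IsProbabilityMeasure μ]
    (d : ℕ) (hd : 1 ≤ d)
    (X : ℕ → Ω → (Fin d → ℤ))
    (hmeas : ∀ i, Measurable (X i))
    (hindep : iIndepFun X μ)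
    (hident : ∀ i, μ.map (X i) = μ.map (X 0))
    (hγ0 : 0 < noReturnProb d μ X) (hγ1 : noReturnProb d μ X < 1)
    (m : ℕ) (hm : 1 ≤ m) (ε : ℝ) (hε : 0 < ε) :
    ∀ᵐ ω ∂μ, ∃ N : ℕ, ∀ n : ℕ, N ≤ n →
      (maxLocalTime d X n ω : ℝ) ≤
        (1 / Real.log (1 / (1 - noReturnProb d μ X))) *
          ((∑ k ∈ Finset.Ico 1 m, itlog k n) + (1 + ε) * itlog m n) :=
  stmt9_general μ d X hmeas hindep hident hγ0 hγ1 m hm ε hε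
end
end

section
/- Almost surely, limsup_{n→∞} l(n)/log n ≤ 1/λ_*. -/
/-!
Split a run of returns of the walk to its starting point at the first return time `s`. The event
"first return at `s`" depends on `X_0, …, X_{s-1}`, the later returns are returns of the walk with
increments `X_s, X_{s+1}, …`, which is independent of it and has the same law as the original walk.
By induction, at least `j` returns occur with probability at most `(1 - γ)^j`. A site visited
`k + 1` times up to time `n` is first visited at one of `n + 1` times, so
`P(l(n) > k) ≤ (n + 1) (1 - γ)^k`. Along the times `2^m` this tail is summable at level
`k ≈ c m log 2` whenever `c λ_* > 1`; Borel–Cantelli and the monotonicity of `l` then give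
`l(n) ≤ c log n + 1` for all large `n`, almost surely.
-/

open MeasureTheory ProbabilityTheory Filter
open scoped ENNReal

noncomputable section

open Topology

section DeterminedEvents

variable {Ω ι β : Type*}

def IsDeterminedBy (X : ι → Ω → β) (S : Set ι) (E : Set Ω) : Prop :=
  ∀ ⦃ω ω' : Ω⦄, (∀ i ∈ S, X i ω = X i ω') → ω ∈ E → ω' ∈ E

lemma IsDeterminedBy.preimage_image_eq {X : ι → Ω → β} {S : Set ι} {E : Set Ω}
    (hE : IsDeterminedBy X S E) :
    (fun ω (i : S) => X i ω) ⁻¹' ((fun ω (i : S) => X i ω) '' E) = E :=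
  Set.Subset.antisymm (fun _ ⟨_, hω', heq⟩ => hE (fun i hi => congrFun heq ⟨i, hi⟩) hω')
    (Set.subset_preimage_image _ _)

variable [MeasurableSpace Ω] [MeasurableSpace β] [Countable β] [MeasurableSingletonClass β]
  {μ : Measure Ω} {X : ι → Ω → β}

lemma IsDeterminedBy.measurableSet {S : Finset ι} {E : Set Ω} (hX : ∀ i, Measurable (X i))
    (hE : IsDeterminedBy X S E) : MeasurableSet E := by
  rw [← hE.preimage_image_eq]
  exact (measurable_pi_lambda _ fun i : S => hX i) (Set.to_countable _).measurableSet

lemma ProbabilityTheory.iIndepFun.measure_inter_eq_mul_of_isDeterminedBy (hindep : iIndepFun X μ)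
    (hX : ∀ i, Measurable (X i)) {S T : Finset ι} (hST : Disjoint S T) {E F : Set Ω}
    (hE : IsDeterminedBy X S E) (hF : IsDeterminedBy X T F) :
    μ (E ∩ F) = μ E * μ F := by
  rw [← hE.preimage_image_eq, ← hF.preimage_image_eq]
  exact (hindep.indepFun_finset S T hST hX).measure_inter_preimage_eq_mul _ _
    (Set.to_countable _).measurableSet (Set.to_countable _).measurableSet

end DeterminedEvents

structure IsIID {Ω β : Type*} [MeasurableSpace Ω] [MeasurableSpace β] (μ : Measure Ω)
    (X : ℕ → Ω → β) : Prop where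
  measurable : ∀ i, Measurable (X i)
  indep : iIndepFun X μ
  map_eq : ∀ i, μ.map (X i) = μ.map (X 0)

namespace IsIID

variable {Ω β : Type*} [MeasurableSpace Ω] [MeasurableSpace β] {μ : Measure Ω}
  {X : ℕ → Ω → β}

lemma shift (hX : IsIID μ X) (a : ℕ) : IsIID μ fun i => X (a + i) :=
  ⟨fun _ => hX.measurable _, hX.indep.precomp (add_right_injective a),
    fun _ => (hX.map_eq _).trans (hX.map_eq _).symm⟩

lemma map_shift_eq [IsProbabilityMeasure μ] (hX : IsIID μ X) (a : ℕ) :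
    μ.map (fun ω i => X (a + i) ω) = μ.map (fun ω i => X i ω) := by
  rw [(hX.shift a).indep.map_fun_eq_infinitePi_map (hX.shift a).measurable,
    hX.indep.map_fun_eq_infinitePi_map hX.measurable]
  simp only [hX.map_eq]

end IsIID

namespace RandomWalk

variable {Ω : Type*} {d : ℕ} {X : ℕ → Ω → (Fin d → ℤ)}

def returnEvent (d : ℕ) (X : ℕ → Ω → (Fin d → ℤ)) : Set Ω :=
  {ω | ∃ m, 1 ≤ m ∧ walk d X m ω = 0}

def firstReturnAt (d : ℕ) (X : ℕ → Ω → (Fin d → ℤ)) (s : ℕ) : Set Ω :=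
  {ω | walk d X s ω = 0 ∧ ∀ m ∈ Finset.Ioo 0 s, walk d X m ω ≠ 0}

def returnCount (d : ℕ) (X : ℕ → Ω → (Fin d → ℤ)) (N : ℕ) (ω : Ω) : ℕ :=
  ((Finset.Icc 1 N).filter fun m => walk d X m ω = 0).card

lemma walk_congr {ω ω' : Ω} {m : ℕ} (h : ∀ i < m, X i ω = X i ω') :
    walk d X m ω = walk d X m ω' :=
  Finset.sum_congr rfl fun i hi => h i (Finset.mem_range.1 hi)

lemma walk_add (X : ℕ → Ω → (Fin d → ℤ)) (a m : ℕ) (ω : Ω) :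
    walk d X (a + m) ω = walk d X a ω + walk d (fun i => X (a + i)) m ω :=
  Finset.sum_range_add _ _ _

lemma card_le_returnCount_add_one {ω : Ω} {a N : ℕ} {T : Finset ℕ}
    (hT : ∀ m ∈ T, a ≤ m ∧ m ≤ N ∧ walk d X m ω = walk d X a ω) :
    T.card ≤ returnCount d (fun i => X (a + i)) (N - a) ω + 1 := by
  set R := (Finset.Icc 1 (N - a)).filter fun m => walk d (fun i => X (a + i)) m ω = 0
  have hsub : T ⊆ insert a (R.image (fun m => a + m)) := by
    intro m hm
    obtain ⟨ham, hmN, hm_eq⟩ := hT m hm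
    rcases ham.eq_or_lt with rfl | ham
    · exact Finset.mem_insert_self _ _
    have hret : walk d (fun i => X (a + i)) (m - a) ω = 0 := by
      have h := walk_add X a (m - a) ω
      rwa [Nat.add_sub_cancel' ham.le, hm_eq, left_eq_add] at h
    exact Finset.mem_insert_of_mem (Finset.mem_image.2
      ⟨m - a, Finset.mem_filter.2 ⟨Finset.mem_Icc.2 ⟨by omega, by omega⟩, hret⟩, by omega⟩)
  calc T.card ≤ (insert a (R.image (fun m => a + m))).card := Finset.card_le_card hsub
    _ ≤ (R.image (fun m => a + m)).card + 1 := Finset.card_insert_le _ _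
    _ ≤ R.card + 1 := Nat.add_le_add_right Finset.card_image_le 1

lemma setOf_returnCount_succ_subset (j N : ℕ) :
    {ω | j + 1 ≤ returnCount d X N ω} ⊆ ⋃ s ∈ Finset.Icc 1 N,
      firstReturnAt d X s ∩ {ω | j ≤ returnCount d (fun i => X (s + i)) (N - s) ω} := by
  intro ω hω
  set T := (Finset.Icc 1 N).filter fun m => walk d X m ω = 0
  change j + 1 ≤ T.card at hω
  have hT : T.Nonempty := Finset.card_pos.1 (by omega)
  have hmemT : ∀ {m}, m ∈ T ↔ (1 ≤ m ∧ m ≤ N) ∧ walk d X m ω = 0 := by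
    intro m
    simp only [T, Finset.mem_filter, Finset.mem_Icc]
  obtain ⟨⟨hs1, hsN⟩, hs0⟩ := hmemT.1 (T.min'_mem hT)
  have hfirst : ∀ m ∈ Finset.Ioo 0 (T.min' hT), walk d X m ω ≠ 0 := fun m hm hm0 => by
    rw [Finset.mem_Ioo] at hm
    have := T.min'_le m (hmemT.2 ⟨⟨hm.1, by omega⟩, hm0⟩)
    omega
  have hcard := card_le_returnCount_add_one (T := T) (a := T.min' hT) (N := N) fun m hm =>
    ⟨T.min'_le m hm, (hmemT.1 hm).1.2, (hmemT.1 hm).2.trans hs0.symm⟩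
  exact Set.mem_biUnion (Finset.mem_Icc.2 ⟨hs1, hsN⟩)
    ⟨⟨hs0, hfirst⟩, Nat.le_of_add_le_add_right (hω.trans hcard)⟩

lemma pairwiseDisjoint_firstReturnAt (X : ℕ → Ω → (Fin d → ℤ)) :
    (Set.Ioi 0).PairwiseDisjoint (firstReturnAt d X) := by
  have key : ∀ {s s'}, 0 < s → s < s' → Disjoint (firstReturnAt d X s) (firstReturnAt d X s') :=
    fun hs hss' => Set.disjoint_left.2 fun _ hω hω' =>
      hω'.2 _ (Finset.mem_Ioo.2 ⟨hs, hss'⟩) hω.1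
  intro s hs s' hs' hne
  rcases hne.lt_or_gt with h | h
  exacts [key hs h, (key hs' h).symm]

lemma biUnion_firstReturnAt_subset (N : ℕ) :
    ⋃ s ∈ Finset.Icc 1 N, firstReturnAt d X s ⊆ returnEvent d X :=
  Set.iUnion₂_subset fun s hs _ hω => ⟨s, (Finset.mem_Icc.1 hs).1, hω.1⟩

lemma isDeterminedBy_firstReturnAt (X : ℕ → Ω → (Fin d → ℤ)) (s : ℕ) :
    IsDeterminedBy X ↑(Finset.range s) (firstReturnAt d X s) := by
  rintro ω ω' h ⟨h0, hne⟩
  have hw : ∀ m ≤ s, walk d X m ω = walk d X m ω' := fun m hm =>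
    walk_congr fun i hi => h i (by simp only [Finset.coe_range, Set.mem_Iio]; omega)
  exact ⟨hw s le_rfl ▸ h0, fun m hm => hw m (Finset.mem_Ioo.1 hm).2.le ▸ hne m hm⟩

lemma isDeterminedBy_returnCount_shift (X : ℕ → Ω → (Fin d → ℤ)) (s M j : ℕ) :
    IsDeterminedBy X ↑(Finset.Ico s (s + M))
      {ω | j ≤ returnCount d (fun i => X (s + i)) M ω} := by
  intro ω ω' h hω
  have hw : ∀ m ∈ Finset.Icc 1 M, walk d (fun i => X (s + i)) m ω =
      walk d (fun i => X (s + i)) m ω' := fun m hm =>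
    walk_congr fun i hi => h (s + i) (by
      simp only [Finset.mem_Icc, Finset.coe_Ico, Set.mem_Ico] at hm ⊢; omega)
  have hcount : returnCount d (fun i => X (s + i)) M ω = returnCount d (fun i => X (s + i)) M ω' :=
    congrArg Finset.card (Finset.filter_congr fun m hm => by rw [hw m hm])
  exact (hω.trans_eq hcount : j ≤ _)

lemma monotone_maxLocalTime (X : ℕ → Ω → (Fin d → ℤ)) (ω : Ω) :
    Monotone fun n => maxLocalTime d X n ω := fun n n' h =>
  calc maxLocalTime d X n ω
      ≤ (Finset.range (n + 1)).sup fun i => localTime d X n' (walk d X i ω) ω :=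
        Finset.sup_mono_fun fun _ _ =>
          Finset.sum_le_sum_of_subset (Finset.range_subset_range.2 (by omega))
    _ ≤ maxLocalTime d X n' ω := Finset.sup_mono (Finset.range_subset_range.2 (by omega))

lemma exists_le_returnCount_of_lt_maxLocalTime {ω : Ω} {n k : ℕ}
    (h : k + 1 ≤ maxLocalTime d X n ω) :
    ∃ a ∈ Finset.range (n + 1), k ≤ returnCount d (fun i => X (a + i)) (n - a) ω := by
  obtain ⟨i, -, hi⟩ := (Finset.le_sup_iff (by simp)).1 h
  rw [localTime, ← Finset.card_filter] at hi
  set T := (Finset.range (n + 1)).filter fun m => walk d X m ω = walk d X i ω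
  have hT : T.Nonempty := Finset.card_pos.1 (by omega)
  obtain ⟨ha, ha_eq⟩ := Finset.mem_filter.1 (T.min'_mem hT)
  have hcard := card_le_returnCount_add_one (T := T) (a := T.min' hT) (N := n) fun m hm =>
    ⟨T.min'_le m hm, Nat.lt_succ_iff.1 (Finset.mem_range.1 (Finset.mem_filter.1 hm).1),
      (Finset.mem_filter.1 hm).2.trans ha_eq.symm⟩
  exact ⟨T.min' hT, ha, by omega⟩

variable [MeasurableSpace Ω] {μ : Measure Ω}

lemma measurable_walk (hX : ∀ i, Measurable (X i)) (m : ℕ) : Measurable (walk d X m) :=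
  Finset.measurable_sum _ fun i _ => hX i

lemma measurableSet_returnEvent (hX : ∀ i, Measurable (X i)) :
    MeasurableSet (returnEvent d X) := by
  simp only [returnEvent, Set.ofPred_exists]
  exact MeasurableSet.iUnion fun m =>
    (MeasurableSet.const _).inter (measurable_walk hX m (measurableSet_singleton 0))

lemma noReturnProb_eq [IsProbabilityMeasure μ] (hX : ∀ i, Measurable (X i)) :
    noReturnProb d μ X = 1 - (μ (returnEvent d X)).toReal := by
  have : {ω | ∀ n, 1 ≤ n → walk d X n ω ≠ 0} = (returnEvent d X)ᶜ := by
    ext; simp [returnEvent]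
  rw [noReturnProb, this, prob_compl_eq_one_sub (measurableSet_returnEvent hX),
    ENNReal.toReal_sub_of_le prob_le_one ENNReal.one_ne_top, ENNReal.toReal_one]

lemma measure_firstReturnAt_inter (hX : IsIID μ X) (s M j : ℕ) :
    μ (firstReturnAt d X s ∩ {ω | j ≤ returnCount d (fun i => X (s + i)) M ω}) =
      μ (firstReturnAt d X s) * μ {ω | j ≤ returnCount d (fun i => X (s + i)) M ω} :=
  hX.indep.measure_inter_eq_mul_of_isDeterminedBy hX.measurable
    (Finset.disjoint_left.2 fun i hi hi' => by
      simp only [Finset.mem_range, Finset.mem_Ico] at hi hi'; omega)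
    (isDeterminedBy_firstReturnAt X s) (isDeterminedBy_returnCount_shift X s M j)

variable [IsProbabilityMeasure μ]

-- `returnEvent d X` is the preimage under `ω ↦ (X i ω)ᵢ` of the same event for the coordinate
-- process on path space, so it only depends on the law of the sequence.
lemma measure_returnEvent_shift (hX : IsIID μ X) (a : ℕ) :
    μ (returnEvent d fun i => X (a + i)) = μ (returnEvent d X) := by
  have hR : MeasurableSet (returnEvent d fun i (v : ℕ → Fin d → ℤ) => v i) :=
    measurableSet_returnEvent measurable_pi_apply
  calc μ (returnEvent d fun i => X (a + i))
      = μ.map (fun ω i => X (a + i) ω) (returnEvent d fun i v => v i) :=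
        (Measure.map_apply (measurable_pi_lambda _ (hX.shift a).measurable) hR).symm
    _ = μ.map (fun ω i => X i ω) (returnEvent d fun i v => v i) := by rw [hX.map_shift_eq a]
    _ = μ (returnEvent d X) := Measure.map_apply (measurable_pi_lambda _ hX.measurable) hR

theorem measure_returnCount_ge_le (hX : IsIID μ X) (j N : ℕ) :
    μ {ω | j ≤ returnCount d X N ω} ≤ μ (returnEvent d X) ^ j := by
  induction j generalizing X N with
  | zero => simp
  | succ j ih =>
    set q := μ (returnEvent d X)
    calc μ {ω | j + 1 ≤ returnCount d X N ω}
        ≤ ∑ s ∈ Finset.Icc 1 N, μ (firstReturnAt d X s ∩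
            {ω | j ≤ returnCount d (fun i => X (s + i)) (N - s) ω}) :=
          (measure_mono (setOf_returnCount_succ_subset j N)).trans (measure_biUnion_finset_le _ _)
      _ = ∑ s ∈ Finset.Icc 1 N, μ (firstReturnAt d X s) *
            μ {ω | j ≤ returnCount d (fun i => X (s + i)) (N - s) ω} :=
          Finset.sum_congr rfl fun s _ => measure_firstReturnAt_inter hX s (N - s) j
      _ ≤ ∑ s ∈ Finset.Icc 1 N, μ (firstReturnAt d X s) * q ^ j := by
          gcongr with s
          exact (ih (hX.shift s) (N - s)).trans_eq (by rw [measure_returnEvent_shift hX s])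
      _ = μ (⋃ s ∈ Finset.Icc 1 N, firstReturnAt d X s) * q ^ j := by
          rw [← Finset.sum_mul, measure_biUnion_finset
            ((pairwiseDisjoint_firstReturnAt X).subset fun s hs => (Finset.mem_Icc.1 hs).1)
            fun s _ => (isDeterminedBy_firstReturnAt X s).measurableSet hX.measurable]
      _ ≤ q * q ^ j := by gcongr; exact measure_mono (biUnion_firstReturnAt_subset N)
      _ = q ^ (j + 1) := (pow_succ' _ _).symm

theorem measure_maxLocalTime_ge_le (hX : IsIID μ X) (n k : ℕ) :
    μ {ω | k + 1 ≤ maxLocalTime d X n ω} ≤ (n + 1) * μ (returnEvent d X) ^ k :=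
  calc μ {ω | k + 1 ≤ maxLocalTime d X n ω}
      ≤ μ (⋃ a ∈ Finset.range (n + 1),
          {ω | k ≤ returnCount d (fun i => X (a + i)) (n - a) ω}) :=
        measure_mono fun _ hω =>
          let ⟨_, ha, hk⟩ := exists_le_returnCount_of_lt_maxLocalTime hω
          Set.mem_biUnion ha hk
    _ ≤ ∑ a ∈ Finset.range (n + 1),
          μ {ω | k ≤ returnCount d (fun i => X (a + i)) (n - a) ω} :=
        measure_biUnion_finset_le _ _
    _ ≤ ∑ _a ∈ Finset.range (n + 1), μ (returnEvent d X) ^ k :=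
        Finset.sum_le_sum fun a _ =>
          (measure_returnCount_ge_le (hX.shift a) k (n - a)).trans_eq
            (by rw [measure_returnEvent_shift hX a])
    _ = (n + 1) * μ (returnEvent d X) ^ k := by simp

end RandomWalk

lemma limsup_div_log_le_of_eventually_le {u : ℕ → ℝ} (hu : ∀ n, 0 ≤ u n) {c : ℝ}
    (h : ∀ᶠ n in atTop, u n ≤ c * Real.log n + 1) :
    limsup (fun n => u n / Real.log n) atTop ≤ c := by
  have hlog : Tendsto (fun n : ℕ => Real.log n) atTop atTop :=
    Real.tendsto_log_atTop.comp tendsto_natCast_atTop_atTop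
  have hlim : Tendsto (fun n : ℕ => c + (Real.log n)⁻¹) atTop (𝓝 c) := by
    simpa using tendsto_const_nhds.add hlog.inv_tendsto_atTop
  calc limsup (fun n => u n / Real.log n) atTop
      ≤ limsup (fun n : ℕ => c + (Real.log n)⁻¹) atTop := by
        refine limsup_le_limsup ?_ (isCoboundedUnder_le_of_le atTop fun n =>
          div_nonneg (hu n) (Real.log_natCast_nonneg n)) hlim.isBoundedUnder_le
        filter_upwards [h, hlog.eventually_gt_atTop 0] with n hn hpos
        rw [div_le_iff₀ hpos, add_mul, inv_mul_cancel₀ hpos.ne']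
        exact hn
    _ = c := hlim.limsup_eq

lemma eventually_le_mul_log_add_one_of_dyadic {u : ℕ → ℕ} (hu : Monotone u) {c : ℝ}
    (hc : 0 ≤ c) (h : ∀ᶠ m : ℕ in atTop, u (2 ^ (m + 1)) ≤ ⌈c * (m * Real.log 2)⌉₊) :
    ∀ᶠ n in atTop, (u n : ℝ) ≤ c * Real.log n + 1 := by
  obtain ⟨M, hM⟩ := eventually_atTop.1 h
  filter_upwards [eventually_ge_atTop (2 ^ M)] with n hn
  have hn0 : n ≠ 0 := Nat.one_le_iff_ne_zero.1 (Nat.one_le_two_pow.trans hn)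
  set m := Nat.log 2 n
  have hun : u n ≤ ⌈c * (m * Real.log 2)⌉₊ :=
    (hu (Nat.lt_pow_succ_log_self one_lt_two n).le).trans
      (hM m (Nat.le_log_of_pow_le one_lt_two hn))
  have hm : (m : ℝ) * Real.log 2 ≤ Real.log n := by
    rw [← Real.log_pow]
    exact Real.log_le_log (by positivity) (by exact_mod_cast Nat.pow_log_le_self 2 hn0)
  calc (u n : ℝ) ≤ ⌈c * (m * Real.log 2)⌉₊ := by exact_mod_cast hun
    _ ≤ c * (m * Real.log 2) + 1 :=
      (Nat.ceil_lt_add_one (mul_nonneg hc (by positivity))).le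
    _ ≤ c * Real.log n + 1 := by gcongr

lemma two_pow_succ_add_one_mul_exp_neg_pow_ceil_le {lam c : ℝ} (hlam : 0 ≤ lam) (m : ℕ) :
    ((2 ^ (m + 1) : ℕ) + 1 : ℝ) * Real.exp (-lam) ^ ⌈c * (m * Real.log 2)⌉₊ ≤
      3 * Real.exp (-((lam * c - 1) * Real.log 2)) ^ m := by
  have h2m : (2 : ℝ) ^ m = Real.exp (m * Real.log 2) := by
    rw [Real.exp_nat_mul, Real.exp_log two_pos]
  calc ((2 ^ (m + 1) : ℕ) + 1 : ℝ) * Real.exp (-lam) ^ ⌈c * (m * Real.log 2)⌉₊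
      ≤ (3 * 2 ^ m) * Real.exp (-(lam * (c * (m * Real.log 2)))) := by
        rw [← Real.exp_nat_mul]
        gcongr
        · push_cast
          linarith [one_le_pow₀ (M₀ := ℝ) (a := 2) (n := m) one_le_two, pow_succ (2 : ℝ) m]
        · nlinarith [Nat.le_ceil (c * (m * Real.log 2))]
    _ = 3 * Real.exp (-((lam * c - 1) * Real.log 2)) ^ m := by
        rw [h2m, ← Real.exp_nat_mul, mul_assoc, ← Real.exp_add]
        ring_nf

section BorelCantelli

variable {Ω : Type*} [MeasurableSpace Ω] {μ : Measure Ω} {L : ℕ → Ω → ℕ} {q : ℝ}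

lemma ae_eventually_le_mul_log_add_one (hL : ∀ ω, Monotone fun n => L n ω)
    (hq0 : 0 < q) (hq1 : q < 1) {c : ℝ} (hc : 1 < Real.log (1 / q) * c)
    (htail : ∀ n k : ℕ, μ {ω | k + 1 ≤ L n ω} ≤ (n + 1) * ENNReal.ofReal q ^ k) :
    ∀ᵐ ω ∂μ, ∀ᶠ n in atTop, (L n ω : ℝ) ≤ c * Real.log n + 1 := by
  set lam := Real.log (1 / q)
  have hlam : 0 < lam := Real.log_pos (one_lt_one_div hq0 hq1)
  have hq : q = Real.exp (-lam) := by
    rw [Real.exp_neg, Real.exp_log (by positivity), one_div, inv_inv]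
  have hc0 : 0 < c := pos_of_mul_pos_right (by linarith) hlam.le
  set k : ℕ → ℕ := fun m => ⌈c * (m * Real.log 2)⌉₊
  set θ := Real.exp (-((lam * c - 1) * Real.log 2))
  have hθ0 : 0 < θ := Real.exp_pos _
  have hθ1 : θ < 1 := Real.exp_lt_one_iff.2 (by nlinarith [Real.log_pos one_lt_two])
  have hblock : ∀ m : ℕ, μ {ω | k m + 1 ≤ L (2 ^ (m + 1)) ω} ≤ ENNReal.ofReal (3 * θ ^ m) := by
    intro m
    refine (htail _ _).trans ?_
    rw [← ENNReal.ofReal_pow hq0.le, ← ENNReal.ofReal_natCast, ← ENNReal.ofReal_one,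
      ← ENNReal.ofReal_add (by positivity) zero_le_one, ← ENNReal.ofReal_mul (by positivity), hq]
    exact ENNReal.ofReal_le_ofReal (two_pow_succ_add_one_mul_exp_neg_pow_ceil_le hlam.le m)
  have hsum : ∑' m, μ {ω | k m + 1 ≤ L (2 ^ (m + 1)) ω} ≠ ⊤ := by
    refine ne_top_of_le_ne_top ?_ (ENNReal.tsum_le_tsum hblock)
    rw [← ENNReal.ofReal_tsum_of_nonneg (fun m => by positivity)
      ((summable_geometric_of_lt_one hθ0.le hθ1).mul_left 3)]
    exact ENNReal.ofReal_ne_top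
  filter_upwards [ae_eventually_notMem hsum] with ω hω
  exact eventually_le_mul_log_add_one_of_dyadic (hL ω) hc0.le
    (hω.mono fun m hm => Nat.lt_succ_iff.1 (not_le.1 hm))

theorem ae_limsup_div_log_le (hL : ∀ ω, Monotone fun n => L n ω) (hq0 : 0 < q) (hq1 : q < 1)
    (htail : ∀ n k : ℕ, μ {ω | k + 1 ≤ L n ω} ≤ (n + 1) * ENNReal.ofReal q ^ k) :
    ∀ᵐ ω ∂μ, limsup (fun n : ℕ => (L n ω : ℝ) / Real.log n) atTop ≤ 1 / Real.log (1 / q) := by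
  set lam := Real.log (1 / q)
  have hlam : 0 < lam := Real.log_pos (one_lt_one_div hq0 hq1)
  have h : ∀ r : ℕ, ∀ᵐ ω ∂μ, ∀ᶠ n in atTop,
      (L n ω : ℝ) ≤ (1 / lam + 1 / (r + 1)) * Real.log n + 1 := by
    intro r
    have hc : 1 < lam * (1 / lam + 1 / (r + 1)) := by
      rw [mul_add, mul_one_div_cancel hlam.ne']
      have : 0 < lam * (1 / (r + 1)) := by positivity
      linarith
    exact ae_eventually_le_mul_log_add_one hL hq0 hq1 hc htail
  filter_upwards [ae_all_iff.2 h] with ω hω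
  have hlim : Tendsto (fun r : ℕ => 1 / lam + 1 / ((r : ℝ) + 1)) atTop (𝓝 (1 / lam)) := by
    simpa using (tendsto_const_nhds (x := 1 / lam)).add tendsto_one_div_add_atTop_nhds_zero_nat
  exact ge_of_tendsto' hlim fun r =>
    limsup_div_log_le_of_eventually_le (fun n => Nat.cast_nonneg _) (hω r)

end BorelCantelli

open RandomWalk

theorem stmt10_general
    {Ω : Type*} [MeasurableSpace Ω] (μ : Measure Ω) [IsProbabilityMeasure μ]
    (d : ℕ)
    (X : ℕ → Ω → (Fin d → ℤ))
    (hmeas : ∀ i, Measurable (X i))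
    (hindep : iIndepFun X μ)
    (hident : ∀ i, μ.map (X i) = μ.map (X 0))
    (hγ0 : 0 < noReturnProb d μ X) (hγ1 : noReturnProb d μ X < 1) :
    ∀ᵐ ω ∂μ,
      limsup (fun n : ℕ => (maxLocalTime d X n ω : ℝ) / Real.log n) atTop ≤
        1 / Real.log (1 / (1 - noReturnProb d μ X)) := by
  have hX : IsIID μ X := ⟨hmeas, hindep, hident⟩
  rw [noReturnProb_eq hmeas] at hγ0 hγ1 ⊢
  rw [sub_sub_cancel]
  refine ae_limsup_div_log_le (monotone_maxLocalTime X) (by linarith) (by linarith) fun n k => ?_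
  rw [ENNReal.ofReal_toReal (measure_ne_top _ _)]
  exact measure_maxLocalTime_ge_le hX n k

/-- Almost surely, `limsup_{n→∞} l(n)/log n ≤ 1/λ_*` where `λ_* = log(1/(1-γ))`. -/
theorem stmt10
    {Ω : Type*} [MeasurableSpace Ω] (μ : Measure Ω) [IsProbabilityMeasure μ]
    (d : ℕ) (hd : 1 ≤ d)
    (X : ℕ → Ω → (Fin d → ℤ))
    (hmeas : ∀ i, Measurable (X i))
    (hindep : iIndepFun X μ)
    (hident : ∀ i, μ.map (X i) = μ.map (X 0))
    (hγ0 : 0 < noReturnProb d μ X) (hγ1 : noReturnProb d μ X < 1) :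
    ∀ᵐ ω ∂μ,
      limsup (fun n : ℕ => (maxLocalTime d X n ω : ℝ) / Real.log n) atTop ≤
        1 / Real.log (1 / (1 - noReturnProb d μ X)) :=
  stmt10_general μ d X hmeas hindep hident hγ0 hγ1

end
end

section
/- Let (a_k)_{k≥1} be a sequence of nonnegative reals, let η ∈ (0,1) and C ≥ 0, and suppose Σ_{k=n}^∞ a_k ≤ C n^{−η} for all n ≥ 1. Then Σ_{k=1}^n k a_k ≤ (C/(1−η)) n^{1−η} for all n ≥ 1. -/
open Finset

lemma rpow_neg_antitoneOn (η : ℝ) (hη0 : 0 < η) :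
    AntitoneOn (fun x : ℝ => x ^ (-η)) (Set.Ici 1) := by
  intro x hx y hy hxy
  simp only
  have hx0 : (0:ℝ) < x := lt_of_lt_of_le one_pos hx
  rw [Real.rpow_neg hx0.le, Real.rpow_neg (hx0.trans_le hxy).le]
  exact inv_anti₀ (Real.rpow_pos_of_pos hx0 η)
    (Real.rpow_le_rpow hx0.le hxy hη0.le)

lemma sum_rpow_neg_le (η : ℝ) (hη0 : 0 < η) (hη1 : η < 1) :
    ∀ n : ℕ, 1 ≤ n → ∑ m ∈ Finset.Icc 1 n, (m : ℝ) ^ (-η) ≤ (n : ℝ) ^ (1 - η) / (1 - η) := by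
  intro n hn
  have h1η : 0 < 1 - η := by linarith
  have hn1 : (1:ℝ) ≤ (n:ℝ) := by exact_mod_cast hn
  have hins : Finset.Icc 1 n = insert 1 (Finset.Icc 2 n) := by
    ext x; simp [Finset.mem_Icc, Finset.mem_insert]; omega
  have h1notin : (1:ℕ) ∉ Finset.Icc 2 n := by simp
  rw [hins, Finset.sum_insert h1notin]
  have htail : ∑ m ∈ Finset.Icc 2 n, (m : ℝ) ^ (-η)
      ≤ ((n:ℝ) ^ (1 - η) - 1) / (1 - η) := by
    have hrw : ∑ m ∈ Finset.Icc 2 n, (m : ℝ) ^ (-η)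
        = ∑ i ∈ Finset.range (n - 1), ((1:ℝ) + ((i:ℕ) + 1 : ℕ)) ^ (-η) := by
      rw [← Finset.Ico_add_one_right_eq_Icc, Finset.sum_Ico_eq_sum_range]
      have : n + 1 - 2 = n - 1 := by omega
      rw [this]
      refine Finset.sum_congr rfl fun i _ => ?_
      congr 1
      push_cast
      ring
    have hanti : AntitoneOn (fun x : ℝ => x ^ (-η))
        (Set.Icc (1:ℝ) (1 + (n - 1 : ℕ))) := by
      apply (rpow_neg_antitoneOn η hη0).mono
      intro x hx; exact hx.1
    have hle := hanti.sum_le_integral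
    rw [hrw]
    have hcast : (1:ℝ) + ((n - 1 : ℕ) : ℝ) = (n:ℝ) := by
      have : ((n - 1 : ℕ) : ℝ) = (n:ℝ) - 1 := by
        push_cast [Nat.cast_sub hn]; ring
      rw [this]; ring
    calc ∑ i ∈ Finset.range (n - 1), ((1:ℝ) + ((i:ℕ) + 1 : ℕ)) ^ (-η)
        ≤ ∫ x in (1:ℝ)..(1 + (n - 1 : ℕ)), x ^ (-η) := hle
      _ = ((n:ℝ) ^ (1 - η) - 1) / (1 - η) := by
          rw [hcast, integral_rpow (Or.inl (by linarith))]
          norm_num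
          rw [show -η + 1 = 1 - η by ring]
  have h1 : ((1:ℕ):ℝ) ^ (-η) = 1 := by rw [Nat.cast_one]; exact Real.one_rpow _
  rw [h1]
  have hdiv : (1:ℝ) ≤ 1 / (1 - η) := by
    rw [le_div_iff₀ h1η]; linarith
  have := htail
  rw [sub_div] at this
  linarith [this, hdiv]

/-- If `a_k ≥ 0` and `Σ_{k=n}^∞ a_k ≤ C n^{-η}` for all `n ≥ 1` (with `0 < η < 1`),
then `Σ_{k=1}^n k a_k ≤ (C/(1-η)) n^{1-η}` for all `n ≥ 1`. -/
theorem stmt18 (a : ℕ → ℝ) (ha : ∀ k, 0 ≤ a k)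
    (η C : ℝ) (hη0 : 0 < η) (hη1 : η < 1) (hC : 0 ≤ C)
    (hsummable : Summable fun k : ℕ => a (k + 1))
    (htail : ∀ n : ℕ, 1 ≤ n → ∑' k : ℕ, a (n + k) ≤ C * (n : ℝ) ^ (-η)) :
    ∀ n : ℕ, 1 ≤ n →
      ∑ k ∈ Finset.Icc 1 n, (k : ℝ) * a k ≤ C / (1 - η) * (n : ℝ) ^ (1 - η) := by
  intro n hn
  have h1η : 0 < 1 - η := by linarith
  -- Step 1: rewrite k * a k as a sum over m ∈ Icc 1 k, then swap
  have hswap : ∑ k ∈ Finset.Icc 1 n, (k : ℝ) * a k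
      = ∑ m ∈ Finset.Icc 1 n, ∑ k ∈ Finset.Icc m n, a k := by
    have h1 : ∀ k ∈ Finset.Icc 1 n, (k:ℝ) * a k = ∑ m ∈ Finset.Icc 1 k, a k := by
      intro k hk
      rw [Finset.sum_const, Nat.card_Icc]
      simp [nsmul_eq_mul]
    rw [Finset.sum_congr rfl h1]
    rw [Finset.sum_comm' (t' := Finset.Icc 1 n) (s' := fun m => Finset.Icc m n)]
    intro k m
    simp only [Finset.mem_Icc]
    omega
  rw [hswap]
  -- Step 2: each inner sum is bounded by the tail
  have hbound : ∀ m ∈ Finset.Icc 1 n, ∑ k ∈ Finset.Icc m n, a k ≤ C * (m:ℝ) ^ (-η) := by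
    intro m hm
    rw [Finset.mem_Icc] at hm
    have hsum : Summable fun j : ℕ => a (m + j) := by
      have := (summable_nat_add_iff (m - 1)).2 hsummable
      refine this.congr fun j => ?_
      congr 1
      omega
    refine le_trans ?_ (htail m hm.1)
    rw [← Finset.Ico_add_one_right_eq_Icc, Finset.sum_Ico_eq_sum_range]
    exact Summable.sum_le_tsum _ (fun j _ => ha _) hsum
  calc ∑ m ∈ Finset.Icc 1 n, ∑ k ∈ Finset.Icc m n, a k
      ≤ ∑ m ∈ Finset.Icc 1 n, C * (m:ℝ) ^ (-η) := Finset.sum_le_sum hbound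
    _ = C * ∑ m ∈ Finset.Icc 1 n, (m:ℝ) ^ (-η) := by rw [Finset.mul_sum]
    _ ≤ C * ((n:ℝ) ^ (1 - η) / (1 - η)) :=
        mul_le_mul_of_nonneg_left (sum_rpow_neg_le η hη0 hη1 n hn) hC
    _ = C / (1 - η) * (n : ℝ) ^ (1 - η) := by ring
end

section
/- Let (a_k)_{k≥1} be a sequence of nonnegative reals, let η ∈ (0,1) and C ≥ 0, and suppose Σ_{k=1}^n k a_k ≤ C n^{1−η} for all n ≥ 1. Then Σ_{k=n}^∞ a_k ≤ (2C/(2^η − 1)) n^{−η} for all n ≥ 1. -/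
/-!
A dyadic block `[M, 2M)` carries weights `k ≥ M`, so its mass is at most
`C (2M)^{1-η} / M = C 2^{1-η} M^{-η}`. Cutting `[n, ∞)` into the blocks `[2^j n, 2^{j+1} n)`
bounds the tail by the geometric series `C 2^{1-η} n^{-η} Σ_j 2^{-jη} = 2C/(2^η - 1) · n^{-η}`.
-/

open Finset Real

section

variable {a : ℕ → ℝ}

lemma mul_sum_Ico_le_sum_Icc_mul (ha : ∀ k, 0 ≤ a k) {M : ℕ} (hM : 1 ≤ M) (N : ℕ) :
    (M : ℝ) * ∑ k ∈ Ico M N, a k ≤ ∑ k ∈ Icc 1 N, (k : ℝ) * a k := by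
  rw [mul_sum]
  calc ∑ k ∈ Ico M N, (M : ℝ) * a k
      ≤ ∑ k ∈ Ico M N, (k : ℝ) * a k :=
        sum_le_sum fun k hk => by gcongr; exacts [ha k, (mem_Ico.1 hk).1]
    _ ≤ ∑ k ∈ Icc 1 N, (k : ℝ) * a k :=
        sum_le_sum_of_subset_of_nonneg
          (fun k hk => by simp only [mem_Ico, mem_Icc] at hk ⊢; omega)
          fun k _ _ => mul_nonneg k.cast_nonneg (ha k)

lemma sum_Ico_two_mul_le_of_sum_Icc_mul_le (ha : ∀ k, 0 ≤ a k) {η C : ℝ}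
    (hsum : ∀ n : ℕ, 1 ≤ n → ∑ k ∈ Icc 1 n, (k : ℝ) * a k ≤ C * (n : ℝ) ^ (1 - η))
    {M : ℕ} (hM : 1 ≤ M) :
    ∑ k ∈ Ico M (2 * M), a k ≤ C * 2 ^ (1 - η) * (M : ℝ) ^ (-η) := by
  have hM0 : (0 : ℝ) < M := by exact_mod_cast hM
  refine le_of_mul_le_mul_left ?_ hM0
  calc (M : ℝ) * ∑ k ∈ Ico M (2 * M), a k
      ≤ C * ((2 * M : ℕ) : ℝ) ^ (1 - η) :=
        (mul_sum_Ico_le_sum_Icc_mul ha hM _).trans (hsum _ (by omega))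
    _ = M * (C * 2 ^ (1 - η) * (M : ℝ) ^ (-η)) := by
        rw [Nat.cast_mul, Nat.cast_two, mul_rpow zero_le_two hM0.le, sub_eq_add_neg,
          rpow_add hM0, rpow_one]
        ring

lemma sum_Ico_two_pow_mul_le_of_dyadic {η B : ℝ} {n : ℕ}
    (hblock : ∀ M, n ≤ M → ∑ k ∈ Ico M (2 * M), a k ≤ B * (M : ℝ) ^ (-η)) (m : ℕ) :
    ∑ k ∈ Ico n (2 ^ m * n), a k ≤ B * (n : ℝ) ^ (-η) * ∑ j ∈ range m, ((2 : ℝ) ^ (-η)) ^ j := by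
  induction m with
  | zero => simp
  | succ m ih =>
    have hle : n ≤ 2 ^ m * n := Nat.le_mul_of_pos_left n (by positivity)
    have hblock_m : ∑ k ∈ Ico (2 ^ m * n) (2 ^ (m + 1) * n), a k
        ≤ B * (n : ℝ) ^ (-η) * ((2 : ℝ) ^ (-η)) ^ m := by
      rw [pow_succ, mul_comm _ 2, mul_assoc]
      calc _ ≤ B * ((2 ^ m * n : ℕ) : ℝ) ^ (-η) := hblock _ hle
        _ = _ := by
          rw [Nat.cast_mul, Nat.cast_pow, Nat.cast_two, mul_rpow (by positivity) n.cast_nonneg,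
            ← rpow_pow_comm zero_le_two]
          ring
    rw [← sum_Ico_consecutive _ hle (Nat.mul_le_mul_right n (Nat.pow_le_pow_right two_pos
      m.le_succ)), sum_range_succ, mul_add]
    exact add_le_add ih hblock_m

lemma sum_Ico_le_of_dyadic (ha : ∀ k, 0 ≤ a k) {η B : ℝ} (hη : 0 < η) (hB : 0 ≤ B)
    {n : ℕ} (hn : 1 ≤ n)
    (hblock : ∀ M, n ≤ M → ∑ k ∈ Ico M (2 * M), a k ≤ B * (M : ℝ) ^ (-η)) (N : ℕ) :
    ∑ k ∈ Ico n N, a k ≤ B * (n : ℝ) ^ (-η) / (1 - 2 ^ (-η)) := by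
  have hr0 : (0 : ℝ) ≤ 2 ^ (-η) := by positivity
  have hr1 : (2 : ℝ) ^ (-η) < 1 := rpow_lt_one_of_one_lt_of_neg one_lt_two (neg_neg_of_pos hη)
  have hN : N ≤ 2 ^ N * n := (Nat.lt_two_pow_self).le.trans (Nat.le_mul_of_pos_right _ hn)
  calc ∑ k ∈ Ico n N, a k
      ≤ ∑ k ∈ Ico n (2 ^ N * n), a k :=
        sum_le_sum_of_subset_of_nonneg (Ico_subset_Ico le_rfl hN) fun k _ _ => ha k
    _ ≤ B * (n : ℝ) ^ (-η) * ∑ j ∈ range N, ((2 : ℝ) ^ (-η)) ^ j :=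
        sum_Ico_two_pow_mul_le_of_dyadic hblock N
    _ ≤ B * (n : ℝ) ^ (-η) * (1 / (1 - 2 ^ (-η))) := by
        gcongr
        rw [range_eq_Ico]
        simpa using geom_sum_Ico_le_of_lt_one hr0 hr1 (m := 0) (n := N)
    _ = B * (n : ℝ) ^ (-η) / (1 - 2 ^ (-η)) := by rw [mul_one_div]

lemma summable_nat_add_of_sum_Ico_le (ha : ∀ k, 0 ≤ a k) {n : ℕ} {c : ℝ}
    (h : ∀ N, ∑ k ∈ Ico n N, a k ≤ c) :
    Summable (fun k => a (n + k)) ∧ ∑' k, a (n + k) ≤ c := by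
  have hrange : ∀ N, ∑ k ∈ range N, a (n + k) ≤ c := fun N => by
    simpa [sum_Ico_eq_sum_range] using h (n + N)
  exact ⟨summable_of_sum_range_le (fun k => ha _) hrange,
    tsum_le_of_sum_range_le (fun k => ha _) hrange⟩

end

lemma two_rpow_one_sub_div_one_sub_two_rpow_neg (η : ℝ) (hη : 0 < η) :
    (2 : ℝ) ^ (1 - η) / (1 - 2 ^ (-η)) = 2 / (2 ^ η - 1) := by
  have h2η : (1 : ℝ) < 2 ^ η := one_lt_rpow one_lt_two hη
  rw [rpow_sub zero_lt_two, rpow_one, rpow_neg zero_le_two]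
  field_simp

theorem stmt19_general (a : ℕ → ℝ) (ha : ∀ k, 0 ≤ a k)
    (η C : ℝ) (hη0 : 0 < η) (hC : 0 ≤ C)
    (hsum : ∀ n : ℕ, 1 ≤ n →
      ∑ k ∈ Finset.Icc 1 n, (k : ℝ) * a k ≤ C * (n : ℝ) ^ (1 - η)) :
    (Summable fun k : ℕ => a (k + 1)) ∧
      ∀ n : ℕ, 1 ≤ n →
        ∑' k : ℕ, a (n + k) ≤ 2 * C / ((2 : ℝ) ^ η - 1) * (n : ℝ) ^ (-η) := by
  have hpartial : ∀ n, 1 ≤ n → ∀ N, ∑ k ∈ Ico n N, a k ≤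
      2 * C / ((2 : ℝ) ^ η - 1) * (n : ℝ) ^ (-η) := fun n hn N => by
    have := sum_Ico_le_of_dyadic ha hη0 (by positivity) hn
      (fun M hM => sum_Ico_two_mul_le_of_sum_Icc_mul_le ha hsum (hn.trans hM)) N
    rwa [mul_div_right_comm, mul_div_assoc, two_rpow_one_sub_div_one_sub_two_rpow_neg η hη0,
      ← mul_div_assoc, mul_comm C] at this
  refine ⟨?_, fun n hn => (summable_nat_add_of_sum_Ico_le ha (hpartial n hn)).2⟩
  simpa only [add_comm 1] using (summable_nat_add_of_sum_Ico_le ha (hpartial 1 le_rfl)).1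

/-- If `a_k ≥ 0` and `Σ_{k=1}^n k a_k ≤ C n^{1-η}` for all `n ≥ 1` (with `0 < η < 1`),
then the series converges and `Σ_{k=n}^∞ a_k ≤ (2C/(2^η - 1)) n^{-η}` for all `n ≥ 1`. -/
theorem stmt19 (a : ℕ → ℝ) (ha : ∀ k, 0 ≤ a k)
    (η C : ℝ) (hη0 : 0 < η) (hη1 : η < 1) (hC : 0 ≤ C)
    (hsum : ∀ n : ℕ, 1 ≤ n →
      ∑ k ∈ Finset.Icc 1 n, (k : ℝ) * a k ≤ C * (n : ℝ) ^ (1 - η)) :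
    (Summable fun k : ℕ => a (k + 1)) ∧
      ∀ n : ℕ, 1 ≤ n →
        ∑' k : ℕ, a (n + k) ≤ 2 * C / ((2 : ℝ) ^ η - 1) * (n : ℝ) ^ (-η) :=
  stmt19_general a ha η C hη0 hC hsum
end
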